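/- The Heawood graph contains exactly 21 eight-cycles; that is, the set of subgraphs of the Heawood graph that are isomorphic to the cycle graph on 8 vertices has cardinality 21. -/

import Mathlib

instance : DecidablePred (Even : ZMod 14 → Prop) :=
  fun i => decidable_of_iff (∃ r, i = r + r) Iff.rfl

instance : DecidablePred (Odd : ZMod 14 → Prop) :=
  fun i => decidable_of_iff (∃ r, i = 2 * r + 1) Iff.rfl

/-- The Heawood graph: the simple graph on vertex set `ZMod 14` in which distinct vertices
`i` and `j` are adjacent iff `j = i + 1`, or `j = i - 1`, or (`i` is even and `j = i + 5`),
or (`i` is odd and `j = i - 5`). -/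
def heawood : SimpleGraph (ZMod 14) where
  Adj i j := i ≠ j ∧ (j = i + 1 ∨ j = i - 1 ∨ (Even i ∧ j = i + 5) ∨ (Odd i ∧ j = i - 5))
  symm := ⟨by intro i j; revert i j; decide⟩
  loopless := ⟨by intro i; revert i; decide⟩

/-- An `n`-cycle of a simple graph `G` is a subgraph of `G` isomorphic to the cycle graph
on `n` vertices. -/
def IsNCycle {V : Type*} {G : SimpleGraph V} (n : ℕ) (C : G.Subgraph) : Prop :=
  Nonempty (C.coe ≃g SimpleGraph.cycleGraph n)


instance : DecidableRel heawood.Adj := fun i j => by unfold heawood; infer_instance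

/-! ### Computation layer -/

abbrev V14 := ZMod 14

def adjB (a b : V14) : Bool :=
  (b.val == (a.val+1) % 14) || (a.val == (b.val+1) % 14) ||
  (a.val % 2 == 0 && b.val == (a.val+5) % 14) || (b.val % 2 == 0 && a.val == (b.val+5) % 14)

lemma adjB_iff {a b : V14} : adjB a b = true ↔ heawood.Adj a b := by revert a b; decide

def allV : List V14 := List.finRange 14

lemma mem_allV (v : V14) : v ∈ allV := List.mem_finRange v

def pext (S : List (List V14)) : List (List V14) :=
  S.flatMap (fun l => match l with
    | [] => []
    | a :: _ => ((allV.filter (fun b => adjB a b && !decide (b ∈ l))).map (· :: l)))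

def paths : ℕ → List (List V14)
  | 0 => allV.map (fun v => [v])
  | n+1 => pext (paths n)

def closes (l : List V14) : Bool :=
  match l.head?, l.getLast? with
  | some a, some b => adjB b a
  | _, _ => false

def cycleLists : List (List V14) := (paths 7).filter closes

def encE (a b : ℕ) : ℕ := if a ≤ b then a * 14 + b else b * 14 + a

lemma encE_comm (a b : ℕ) : encE a b = encE b a := by
  unfold encE; split_ifs <;> omega

def enc : Sym2 V14 → ℕ := Sym2.lift ⟨fun a b => encE a.val b.val, fun a b => encE_comm _ _⟩

def edgesL (l : List V14) : List ℕ := (l.zip (l.rotate 1)).map (fun p => encE p.1.val p.2.val)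

def allE : List (Finset ℕ) := (cycleLists.map (fun l => (edgesL l).toFinset)).dedup

set_option maxRecDepth 100000 in
set_option maxHeartbeats 2000000 in
theorem length_allE : allE.length = 21 := by decide

/-! ### paths membership -/

lemma mem_paths {n : ℕ} {l : List V14} :
    l ∈ paths n ↔ l.length = n + 1 ∧ l.Nodup ∧ l.Chain' (fun a b => heawood.Adj a b) := by
  induction n generalizing l with
  | zero =>
    simp only [paths, List.mem_map]
    constructor
    · rintro ⟨v, -, rfl⟩; simp [List.Chain']
    · rintro ⟨hl, -, -⟩
      match l, hl with
      | [v], _ => exact ⟨v, mem_allV v, rfl⟩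
  | succ n ih =>
    simp only [paths, pext, List.mem_flatMap]
    constructor
    · rintro ⟨l', hl', hm⟩
      match l' with
      | [] => simp at hm
      | a :: t =>
        simp only [List.mem_map, List.mem_filter, Bool.and_eq_true, Bool.not_eq_true',
          decide_eq_false_iff_not] at hm
        obtain ⟨b, ⟨-, hab, hbn⟩, rfl⟩ := hm
        obtain ⟨hlen, hnd, hch⟩ := ih.1 hl'
        refine ⟨by simpa using hlen, ?_, ?_⟩
        · exact List.nodup_cons.2 ⟨hbn, hnd⟩
        · exact List.isChain_cons_cons.2 ⟨(adjB_iff.1 hab).symm, hch⟩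
    · rintro ⟨hlen, hnd, hch⟩
      match l with
      | b :: a :: t =>
        refine ⟨a :: t, ih.2 ⟨by simpa using hlen, (List.nodup_cons.1 hnd).2, (List.isChain_cons_cons.1 hch).2⟩, ?_⟩
        simp only [List.mem_map, List.mem_filter, Bool.and_eq_true, Bool.not_eq_true',
          decide_eq_false_iff_not]
        exact ⟨b, ⟨mem_allV b, adjB_iff.2 (List.isChain_cons_cons.1 hch).1.symm, (List.nodup_cons.1 hnd).1⟩, rfl⟩

lemma mem_cycleLists {l : List V14} :
    l ∈ cycleLists ↔ l.length = 8 ∧ l.Nodup ∧ l.Chain' (fun a b => heawood.Adj a b)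
      ∧ closes l = true := by
  simp only [cycleLists, List.mem_filter, mem_paths]
  tauto


/-! ### Subgraph layer -/

open SimpleGraph

def good (f : Fin 8 → V14) : Prop :=
  Function.Injective f ∧ ∀ i, heawood.Adj (f i) (f (i + 1))

def cSub (f : Fin 8 → V14) : heawood.Subgraph where
  verts := Set.range f
  Adj a b := (∃ i, s(a, b) = s(f i, f (i + 1))) ∧ heawood.Adj a b
  adj_sub h := h.2
  edge_vert := by
    rintro a b ⟨⟨i, h⟩, -⟩
    rw [Sym2.eq_iff] at h
    rcases h with ⟨h1, -⟩ | ⟨h1, -⟩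
    exacts [⟨i, h1.symm⟩, ⟨i + 1, h1.symm⟩]
  symm := by
    constructor
    rintro a b ⟨⟨i, h⟩, ha⟩
    exact ⟨⟨i, by rwa [Sym2.eq_swap]⟩, ha.symm⟩

lemma cycleGraph8_adj {i j : Fin 8} :
    (cycleGraph 8).Adj i j ↔ j = i + 1 ∨ i = j + 1 := by revert i j; decide

lemma good_isNCycle {f : Fin 8 → V14} (hf : good f) : IsNCycle 8 (cSub f) := by
  obtain ⟨hinj, hadj⟩ := hf
  have hbij : Function.Bijective (fun i : Fin 8 => (⟨f i, ⟨i, rfl⟩⟩ : (cSub f).verts)) := by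
    constructor
    · intro i j h
      exact hinj (congrArg Subtype.val h)
    · rintro ⟨v, i, rfl⟩
      exact ⟨i, rfl⟩
  refine ⟨(RelIso.mk (Equiv.ofBijective _ hbij) ?_).symm⟩
  intro i j
  show (cSub f).Adj (f i) (f j) ↔ (cycleGraph 8).Adj i j
  rw [cycleGraph8_adj]
  constructor
  · rintro ⟨⟨k, h⟩, -⟩
    rw [Sym2.eq_iff] at h
    rcases h with ⟨h1, h2⟩ | ⟨h1, h2⟩
    · left; rw [hinj h1]; exact hinj h2
    · right; rw [hinj h2]; exact hinj h1
  · rintro (rfl | rfl)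
    · exact ⟨⟨i, rfl⟩, hadj i⟩
    · exact ⟨⟨j, Sym2.eq_swap⟩, (hadj j).symm⟩

lemma isNCycle_exists {C : heawood.Subgraph} (hC : IsNCycle 8 C) :
    ∃ f, good f ∧ C = cSub f := by
  obtain ⟨e⟩ := hC
  set f : Fin 8 → V14 := fun i => ((e.symm i : C.verts) : V14) with hfdef
  have hval : ∀ i, (e.symm i : C.verts) = (⟨f i, (e.symm i).2⟩ : C.verts) := fun i => rfl
  have hcoe : ∀ i j : Fin 8, C.Adj (f i) (f j) ↔ (cycleGraph 8).Adj i j := by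
    intro i j
    rw [← e.symm.map_rel_iff]
    exact Iff.rfl
  have hadj : ∀ i, heawood.Adj (f i) (f (i + 1)) := by
    intro i
    exact C.adj_sub ((hcoe i (i + 1)).2 (cycleGraph8_adj.2 (Or.inl rfl)))
  have hinj : Function.Injective f := by
    intro i j h
    exact e.symm.injective (Subtype.val_injective h)
  refine ⟨f, ⟨hinj, hadj⟩, ?_⟩
  have hvert : C.verts = Set.range f := by
    ext v
    constructor
    · intro hv
      refine ⟨e ⟨v, hv⟩, ?_⟩
      simp [hfdef]
    · rintro ⟨i, rfl⟩
      exact (e.symm i).2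
  ext a b
  · rw [hvert]; rfl
  · show C.Adj a b ↔ (cSub f).Adj a b
    constructor
    · intro h
      have ha : a ∈ C.verts := C.edge_vert h
      have hb : b ∈ C.verts := C.edge_vert h.symm
      have ea : a = f (e ⟨a, ha⟩) := by simp [hfdef]
      have eb : b = f (e ⟨b, hb⟩) := by simp [hfdef]
      have hadj' : (cycleGraph 8).Adj (e ⟨a, ha⟩) (e ⟨b, hb⟩) := by
        rw [← hcoe, ← ea, ← eb]; exact h
      rw [cycleGraph8_adj] at hadj'
      refine ⟨?_, C.adj_sub h⟩
      rcases hadj' with h1 | h1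
      · exact ⟨e ⟨a, ha⟩, by rw [← h1, ← ea, ← eb]⟩
      · exact ⟨e ⟨b, hb⟩, by rw [← h1, ← ea, ← eb, Sym2.eq_swap]⟩
    · rintro ⟨⟨i, h⟩, -⟩
      rw [Sym2.eq_iff] at h
      have key : ∀ k : Fin 8, C.Adj (f k) (f (k + 1)) :=
        fun k => (hcoe k (k + 1)).2 (cycleGraph8_adj.2 (Or.inl rfl))
      rcases h with ⟨rfl, rfl⟩ | ⟨rfl, rfl⟩
      · exact key i
      · exact (key i).symm

lemma cSub_eq_of_edgeSet_eq {f g : Fin 8 → V14} (hf : good f) (hg : good g)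
    (h : (cSub f).edgeSet = (cSub g).edgeSet) : cSub f = cSub g := by
  have hAdj : ∀ a b, (cSub f).Adj a b ↔ (cSub g).Adj a b := by
    intro a b
    rw [← Subgraph.mem_edgeSet, ← Subgraph.mem_edgeSet, h]
  ext a b
  · constructor
    · rintro ⟨i, rfl⟩
      exact (cSub g).edge_vert ((hAdj _ _).1 ⟨⟨i, rfl⟩, hf.2 i⟩)
    · rintro ⟨i, rfl⟩
      exact (cSub f).edge_vert ((hAdj _ _).2 ⟨⟨i, rfl⟩, hg.2 i⟩)
  · exact hAdj a b

/-! ### Linking layer -/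

lemma ofFn_lit (f : Fin 8 → V14) :
    List.ofFn f = [f 0, f 1, f 2, f 3, f 4, f 5, f 6, f 7] := by
  rfl

lemma enc_mk (a b : V14) : enc s(a, b) = encE a.val b.val := rfl

lemma mem_edgesL_ofFn {f : Fin 8 → V14} {x : ℕ} :
    x ∈ edgesL (List.ofFn f) ↔ ∃ i : Fin 8, x = enc s(f i, f (i + 1)) := by
  rw [ofFn_lit]
  show x ∈ List.map _ (List.zip _ (List.rotate _ 1)) ↔ _
  rw [show List.rotate [f 0, f 1, f 2, f 3, f 4, f 5, f 6, f 7] 1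
      = [f 1, f 2, f 3, f 4, f 5, f 6, f 7, f 0] from rfl]
  simp only [List.zip_cons_cons, List.zip_nil_right, List.map_cons, List.map_nil,
    List.mem_cons, List.not_mem_nil, or_false, enc_mk]
  constructor
  · rintro (h | h | h | h | h | h | h | h)
    exacts [⟨0, h⟩, ⟨1, h⟩, ⟨2, h⟩, ⟨3, h⟩, ⟨4, h⟩, ⟨5, h⟩, ⟨6, h⟩, ⟨7, h⟩]
  · rintro ⟨i, h⟩
    fin_cases i
    exacts [Or.inl h, Or.inr (Or.inl h), Or.inr (Or.inr (Or.inl h)),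
      Or.inr (Or.inr (Or.inr (Or.inl h))),
      Or.inr (Or.inr (Or.inr (Or.inr (Or.inl h)))),
      Or.inr (Or.inr (Or.inr (Or.inr (Or.inr (Or.inl h))))),
      Or.inr (Or.inr (Or.inr (Or.inr (Or.inr (Or.inr (Or.inl h)))))),
      Or.inr (Or.inr (Or.inr (Or.inr (Or.inr (Or.inr (Or.inr h))))))]

lemma good_iff_ofFn_mem {f : Fin 8 → V14} :
    good f ↔ List.ofFn f ∈ cycleLists := by
  rw [mem_cycleLists]
  constructor
  · rintro ⟨hinj, hadj⟩
    refine ⟨by simp, (List.nodup_ofFn).2 hinj, ?_, ?_⟩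
    · rw [ofFn_lit]
      simp only [List.Chain', List.isChain_cons_cons, List.isChain_singleton, and_true]
      exact ⟨hadj 0, hadj 1, hadj 2, hadj 3, hadj 4, hadj 5, hadj 6⟩
    · show adjB (f 7) (f 0) = true
      exact adjB_iff.2 (hadj 7)
  · rintro ⟨-, hnd, hch, hcl⟩
    rw [ofFn_lit] at hch hcl
    simp only [List.Chain', List.isChain_cons_cons, List.isChain_singleton, and_true] at hch
    obtain ⟨h0, h1, h2, h3, h4, h5, h6⟩ := hch
    have h7 : heawood.Adj (f 7) (f 0) := adjB_iff.1 hcl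
    refine ⟨(List.nodup_ofFn).1 hnd, ?_⟩
    intro i
    fin_cases i
    exacts [h0, h1, h2, h3, h4, h5, h6, h7]

open Classical in
noncomputable def EF (C : heawood.Subgraph) : Finset ℕ :=
  (Set.toFinite C.edgeSet).toFinset.image enc

lemma EF_cSub {f : Fin 8 → V14} (hf : good f) :
    EF (cSub f) = (edgesL (List.ofFn f)).toFinset := by
  ext x
  simp only [EF, Finset.mem_image, Set.Finite.mem_toFinset, List.mem_toFinset, mem_edgesL_ofFn]
  constructor
  · rintro ⟨e, he, rfl⟩
    induction e with
    | _ a b =>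
      rw [Subgraph.mem_edgeSet] at he
      obtain ⟨⟨i, hi⟩, -⟩ := he
      exact ⟨i, by rw [hi]⟩
  · rintro ⟨i, rfl⟩
    exact ⟨s(f i, f (i + 1)), Subgraph.mem_edgeSet.2 ⟨⟨i, rfl⟩, hf.2 i⟩, rfl⟩

set_option maxRecDepth 10000 in
lemma enc_injective : Function.Injective enc := by
  intro x y
  revert x y
  decide

lemma edgeSet_eq_of_EF_eq {C C' : heawood.Subgraph} (h : EF C = EF C') :
    C.edgeSet = C'.edgeSet := by
  have := Finset.image_injective enc_injective h
  have h2 := congrArg (fun s : Finset (Sym2 V14) => (s : Set (Sym2 V14))) this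
  simpa [Set.Finite.coe_toFinset] using h2

/-! ### Main theorem -/

/-- The Heawood graph contains exactly 21 8-cycles. -/
theorem heawood_count_8_cycles :
    Nat.card {C : heawood.Subgraph // IsNCycle 8 C} = 21 := by
  have hPhi : ∀ C : {C : heawood.Subgraph // IsNCycle 8 C}, EF C.1 ∈ allE := by
    rintro ⟨C, hC⟩
    obtain ⟨f, hf, rfl⟩ := isNCycle_exists hC
    rw [EF_cSub hf]
    exact List.mem_dedup.2 (List.mem_map.2 ⟨List.ofFn f, good_iff_ofFn_mem.1 hf, rfl⟩)
  have hinj : Function.Injective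
      (fun C : {C : heawood.Subgraph // IsNCycle 8 C} => (⟨EF C.1, hPhi C⟩ : {E // E ∈ allE})) := by
    rintro ⟨C, hC⟩ ⟨C', hC'⟩ h
    simp only [Subtype.mk.injEq] at h ⊢
    obtain ⟨f, hf, rfl⟩ := isNCycle_exists hC
    obtain ⟨g, hg, rfl⟩ := isNCycle_exists hC'
    exact cSub_eq_of_edgeSet_eq hf hg (edgeSet_eq_of_EF_eq h)
  have hsurj : Function.Surjective
      (fun C : {C : heawood.Subgraph // IsNCycle 8 C} => (⟨EF C.1, hPhi C⟩ : {E // E ∈ allE})) := by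
    rintro ⟨E, hE⟩
    obtain ⟨l, hl, rfl⟩ := List.mem_map.1 (List.mem_dedup.1 hE)
    have hlen : l.length = 8 := (mem_cycleLists.1 hl).1
    set f : Fin 8 → V14 := fun i => l.get (Fin.cast hlen.symm i) with hfdef
    have hofn : List.ofFn f = l := by
      apply List.ext_getElem (by simp [hlen])
      intro i h1 h2
      rw [List.getElem_ofFn]
      simp [hfdef, List.get_eq_getElem]
    have hgood : good f := good_iff_ofFn_mem.2 (by rw [hofn]; exact hl)
    refine ⟨⟨cSub f, good_isNCycle hgood⟩, ?_⟩
    simp only [Subtype.mk.injEq]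
    rw [EF_cSub hgood, hofn]
  rw [Nat.card_congr (Equiv.ofBijective _ ⟨hinj, hsurj⟩)]
  rw [Nat.card_congr (Equiv.subtypeEquivRight (fun x => (List.mem_toFinset (l := allE)).symm))]
  have hnd : allE.Nodup := by unfold allE; exact List.nodup_dedup _
  rw [Nat.card_eq_fintype_card, Fintype.card_coe,
    List.toFinset_card_of_nodup hnd, length_allE]
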